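/- arXiv:1604.05960 — 2 statements merged into one kernel-verified Lean document; each statement's English description precedes it below -/
import Mathlib

section
/- Let φ be a Bernstein function extended to the right half-plane. Then for every z with Re(z) > 0, |arg φ(z)| ≤ |arg z|. -/
open MeasureTheory Filter Set

/-- A Bernstein function, given by its representing triplet `(κ, δ, μ)`:
`φ(u) = κ + δ·u + ∫₀^∞ (1 - e^{-u y}) μ(dy)`, with `κ, δ ≥ 0`,
`μ` a nonnegative measure on `(0,∞)` with `∫ min(1,y) μ(dy) < ∞`, and `φ ≢ 0`. -/
structure BernsteinFn where
  κ : ℝ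
  δ : ℝ
  μ : Measure ℝ
  hκ : 0 ≤ κ
  hδ : 0 ≤ δ
  hsupp : μ (Set.Iic 0) = 0
  hint : Integrable (fun y : ℝ => min 1 y) μ
  nontriv : ¬ (κ = 0 ∧ δ = 0 ∧ μ = 0)

/-- The Bernstein function as a real function on `(0,∞)`. -/
noncomputable def BernsteinFn.toFun (φ : BernsteinFn) (u : ℝ) : ℝ :=
  φ.κ + φ.δ * u + ∫ y, (1 - Real.exp (-(u * y))) ∂φ.μ

/-- The holomorphic extension of the Bernstein function to the right half-plane. -/
noncomputable def BernsteinFn.toFunC (φ : BernsteinFn) (z : ℂ) : ℂ :=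
  (φ.κ : ℂ) + (φ.δ : ℂ) * z + ∫ y, (1 - Complex.exp (-(z * (y : ℂ)))) ∂φ.μ

/-- The derivative of the Bernstein function: `φ'(u) = δ + ∫₀^∞ y e^{-u y} μ(dy)`. -/
noncomputable def BernsteinFn.deriv1 (φ : BernsteinFn) (u : ℝ) : ℝ :=
  φ.δ + ∫ y, y * Real.exp (-(u * y)) ∂φ.μ

/-!
For `0 < z.re` the closed sector `|arg w| ≤ |arg z|` is the set of `w` with `0 ≤ w.re` and
`|w.im| * z.re ≤ |z.im| * w.re`, visibly a convex cone. It contains `κ`, `δ z`, and each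
`1 - e^{-zy}` with `y > 0`: writing `zy = a + ib`, this is `e^{-a} |sin b| a ≤ |b| (1 - e^{-a} cos b)`,
which follows from `|sin b| ≤ |b|`, `cos b ≤ 1` and `e^{-a} (1 + a) ≤ 1`. Integrating, `φ(z)` lies in
the sector as well.
-/

open Complex

section ArgSector

variable {z w : ℂ}

lemma abs_arg_eq_arctan_of_re_pos (hz : 0 < z.re) : |arg z| = Real.arctan (|z.im| / z.re) := by
  have harg : arg z = Real.arctan (z.im / z.re) := by
    have h := abs_lt.1 (abs_arg_lt_pi_div_two_iff.2 (Or.inl hz))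
    rw [← tan_arg, Real.arctan_tan h.1 h.2]
  rcases abs_cases z.im with ⟨him, hnn⟩ | ⟨him, hneg⟩
  · rw [him, harg, abs_of_nonneg (Real.arctan_nonneg.2 (div_nonneg hnn hz.le))]
  · rw [him, harg, abs_of_neg (Real.arctan_lt_zero.2 (div_neg_of_neg_of_pos hneg hz)),
      neg_div, Real.arctan_neg]

def argSector (z : ℂ) : Set ℂ := {w | 0 ≤ w.re ∧ |w.im| * z.re ≤ |z.im| * w.re}

lemma abs_arg_le_of_mem_argSector (hz : 0 < z.re) (hw : w ∈ argSector z) :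
    |arg w| ≤ |arg z| := by
  obtain ⟨hre, hcross⟩ := hw
  rcases hre.eq_or_lt with hre0 | hrepos
  · have him : w.im = 0 := by
      rw [← hre0, mul_zero] at hcross
      exact abs_eq_zero.1 (le_antisymm (nonpos_of_mul_nonpos_left hcross hz) (abs_nonneg _))
    rw [show w = 0 from ext hre0.symm him, arg_zero, abs_zero]
    exact abs_nonneg _
  · rw [abs_arg_eq_arctan_of_re_pos hz, abs_arg_eq_arctan_of_re_pos hrepos]
    exact Real.arctan_mono ((div_le_div_iff₀ hrepos hz).2 hcross)

lemma argSector_mul_ofReal {y : ℝ} (hy : 0 < y) : argSector (z * y) = argSector z := by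
  ext w
  simp only [argSector, mem_ofPred_eq, mul_re, mul_im, ofReal_re, ofReal_im, mul_zero, sub_zero,
    zero_add, abs_mul, abs_of_pos hy]
  constructor <;> rintro ⟨hre, hcross⟩ <;> refine ⟨hre, ?_⟩ <;> nlinarith

lemma ofReal_mem_argSector {c : ℝ} (hc : 0 ≤ c) : (c : ℂ) ∈ argSector z :=
  ⟨hc, by simpa using mul_nonneg (abs_nonneg z.im) hc⟩

lemma self_mem_argSector (hz : 0 ≤ z.re) : z ∈ argSector z := ⟨hz, le_rfl⟩

lemma ofReal_mul_mem_argSector {c : ℝ} (hc : 0 ≤ c) (hw : w ∈ argSector z) :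
    (c : ℂ) * w ∈ argSector z := by
  obtain ⟨hre, hcross⟩ := hw
  simp only [argSector, mem_ofPred_eq, re_ofReal_mul, im_ofReal_mul, abs_mul, abs_of_nonneg hc]
  exact ⟨mul_nonneg hc hre, by nlinarith⟩

lemma add_mem_argSector (hz : 0 ≤ z.re) {v : ℂ} (hv : v ∈ argSector z) (hw : w ∈ argSector z) :
    v + w ∈ argSector z := by
  obtain ⟨hvre, hv⟩ := hv
  obtain ⟨hwre, hw⟩ := hw
  refine ⟨by simpa using add_nonneg hvre hwre, ?_⟩
  calc |(v + w).im| * z.re ≤ (|v.im| + |w.im|) * z.re :=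
        mul_le_mul_of_nonneg_right (abs_add_le _ _) hz
    _ ≤ |z.im| * (v + w).re := by rw [add_re]; linarith

lemma integral_mem_argSector {α : Type*} [MeasurableSpace α] {μ : Measure α} {f : α → ℂ}
    (hz : 0 ≤ z.re) (hf : Integrable f μ) (hmem : ∀ᵐ x ∂μ, f x ∈ argSector z) :
    ∫ x, f x ∂μ ∈ argSector z := by
  have hre : (∫ x, f x ∂μ).re = ∫ x, (f x).re ∂μ := (integral_re hf).symm
  have him : (∫ x, f x ∂μ).im = ∫ x, (f x).im ∂μ := (integral_im hf).symm
  refine ⟨hre ▸ integral_nonneg_of_ae (hmem.mono fun x hx => hx.1), ?_⟩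
  calc |(∫ x, f x ∂μ).im| * z.re ≤ (∫ x, |(f x).im| ∂μ) * z.re := by
        rw [him]
        exact mul_le_mul_of_nonneg_right abs_integral_le_integral_abs hz
    _ = ∫ x, |(f x).im| * z.re ∂μ := (integral_mul_const _ _).symm
    _ ≤ ∫ x, |z.im| * (f x).re ∂μ :=
        integral_mono_ae (hf.im.abs.mul_const _) (hf.re.const_mul _) (hmem.mono fun x hx => hx.2)
    _ = |z.im| * (∫ x, f x ∂μ).re := by rw [integral_const_mul, hre]

lemma one_sub_exp_neg_mem_argSector (hw : 0 ≤ w.re) : 1 - exp (-w) ∈ argSector w := by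
  set E := Real.exp (-w.re)
  have hre : (1 - exp (-w)).re = 1 - E * Real.cos w.im := by simp [exp_re, E]
  have him : |(1 - exp (-w)).im| = E * |Real.sin w.im| := by
    simp [exp_im, E, abs_mul, Real.abs_exp]
  have hE : E * (1 + w.re) ≤ 1 := by
    calc E * (1 + w.re) ≤ E * Real.exp w.re :=
          mul_le_mul_of_nonneg_left (by linarith [Real.add_one_le_exp w.re]) (Real.exp_pos _).le
      _ = 1 := by rw [← Real.exp_add, neg_add_cancel, Real.exp_zero]
  have hsin : |Real.sin w.im| ≤ |w.im| := Real.abs_sin_le_abs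
  have hcos : Real.cos w.im ≤ 1 := Real.cos_le_one _
  have hEpos : 0 < E := Real.exp_pos _
  have hE1 : E ≤ 1 := by nlinarith
  rw [argSector, mem_ofPred_eq, hre, him]
  refine ⟨by nlinarith, ?_⟩
  nlinarith [mul_nonneg (mul_nonneg hEpos.le hw) (sub_nonneg.2 hsin),
    mul_nonneg (mul_nonneg hEpos.le (abs_nonneg w.im)) (sub_nonneg.2 hcos),
    mul_nonneg (abs_nonneg w.im) (sub_nonneg.2 hE)]

end ArgSector

lemma norm_one_sub_exp_neg_le {w : ℂ} (hw : 0 ≤ w.re) : ‖1 - exp (-w)‖ ≤ 2 * min 1 ‖w‖ := by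
  rcases le_total ‖w‖ 1 with hle | hle
  · rw [min_eq_right hle, norm_sub_rev, ← norm_neg w]
    exact norm_exp_sub_one_le (by rwa [norm_neg])
  · rw [min_eq_left hle]
    calc ‖1 - exp (-w)‖ ≤ ‖(1 : ℂ)‖ + ‖exp (-w)‖ := norm_sub_le _ _
      _ ≤ 1 + 1 := by
          rw [norm_one, norm_exp]
          gcongr
          exact Real.exp_le_one_iff.2 (by simpa using hw)
      _ = 2 * 1 := by norm_num

lemma min_one_mul_le_max_mul_min_one {a y : ℝ} (hy : 0 ≤ y) :
    min 1 (a * y) ≤ max 1 a * min 1 y := by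
  rcases le_total y 1 with hy1 | hy1
  · rw [min_eq_right hy1]
    exact (min_le_right _ _).trans (mul_le_mul_of_nonneg_right (le_max_right _ _) hy)
  · rw [min_eq_left hy1, mul_one]
    exact (min_le_left _ _).trans (le_max_left _ _)

namespace BernsteinFn

variable (φ : BernsteinFn) {z : ℂ}

lemma ae_pos : ∀ᵐ y ∂φ.μ, 0 < y :=
  ae_iff.2 (measure_mono_null (fun _ hy => not_lt.1 hy) φ.hsupp)

lemma integrable_one_sub_exp_neg_mul (hz : 0 ≤ z.re) :
    Integrable (fun y : ℝ => 1 - exp (-(z * y))) φ.μ := by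
  refine Integrable.mono' (φ.hint.const_mul (2 * max 1 ‖z‖)) (by fun_prop) ?_
  filter_upwards [φ.ae_pos] with y hy
  have hzy : 0 ≤ (z * y).re := by simpa using mul_nonneg hz hy.le
  calc ‖1 - exp (-(z * y))‖ ≤ 2 * min 1 (‖z‖ * y) := by
        simpa [norm_mul, abs_of_pos hy] using norm_one_sub_exp_neg_le hzy
    _ ≤ 2 * (max 1 ‖z‖ * min 1 y) := by
        gcongr
        exact min_one_mul_le_max_mul_min_one hy.le
    _ = 2 * max 1 ‖z‖ * min 1 y := by ring

lemma toFunC_mem_argSector (hz : 0 ≤ z.re) : φ.toFunC z ∈ argSector z := by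
  have hintegral : ∫ y, (1 - exp (-(z * y))) ∂φ.μ ∈ argSector z := by
    refine integral_mem_argSector hz (φ.integrable_one_sub_exp_neg_mul hz) ?_
    filter_upwards [φ.ae_pos] with y hy
    rw [← argSector_mul_ofReal hy]
    exact one_sub_exp_neg_mem_argSector (by simpa using mul_nonneg hz hy.le)
  exact add_mem_argSector hz (add_mem_argSector hz (ofReal_mem_argSector φ.hκ)
    (ofReal_mul_mem_argSector φ.hδ (self_mem_argSector hz))) hintegral

end BernsteinFn

/-- For every `z` with `Re z > 0`, `|arg φ(z)| ≤ |arg z|`. -/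
theorem stmt4 (φ : BernsteinFn) (z : ℂ) (hz : 0 < z.re) :
    |Complex.arg (φ.toFunC z)| ≤ |Complex.arg z| :=
  abs_arg_le_of_mem_argSector hz (φ.toFunC_mem_argSector hz.le)
end

section
/- Let f: (0,∞) → ℝ be measurable with f_{a'}(y) := e^{-a'y} f(y) bounded (i.e. ‖f_{a'}‖_∞ < ∞) for some a' ≥ 0. Then for every a ≥ a', every integer n ≥ 1 and every y > 0, the n-fold convolution satisfies |e^{-ay} f^{*n}(y)| ≤ ‖f_{a'}‖_∞^n · y^{n-1} e^{-(a-a')y} / (n-1)!. -/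
/-!
Bound `|f y| ≤ M e^{a' y}`. The exponential weight passes through every convolution unchanged,
since `e^{a'(y-v)} e^{a'v} = e^{a'y}`, so by induction `|f^{*(n+1)}(y)| ≤ M^{n+1} e^{a'y} yⁿ/n!`:
only the polynomial factor is integrated, `∫₀^y (y-v)ⁿ dv = y^{n+1}/(n+1)`.
Multiplying by `e^{-ay}` gives the claim.
-/

open MeasureTheory

/-- The iterated convolution on `(0,∞)`: `convPow f n = f^{*(n+1)}`, where
`f^{*1} = f` and `f^{*(n+1)}(y) = ∫₀^y f^{*n}(y-v) f(v) dv`. -/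
noncomputable def convPow (f : ℝ → ℝ) : ℕ → ℝ → ℝ
  | 0 => f
  | n + 1 => fun y => ∫ v in (0 : ℝ)..y, convPow f n (y - v) * f v

open Real

lemma abs_le_mul_exp_of_abs_exp_neg_mul_le {x b y M : ℝ} (h : |exp (-(b * y)) * x| ≤ M) :
    |x| ≤ M * exp (b * y) := by
  rw [abs_mul, abs_of_pos (exp_pos _), exp_neg, inv_mul_le_iff₀ (exp_pos _)] at h
  linarith

lemma integral_sub_pow (y : ℝ) (n : ℕ) :
    ∫ v in (0 : ℝ)..y, (y - v) ^ n = y ^ (n + 1) / (n + 1) := by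
  simp [intervalIntegral.integral_comp_sub_left (fun u => u ^ n), integral_pow]

lemma abs_convPow_le {f : ℝ → ℝ} {b M : ℝ} (hf : ∀ y, 0 < y → |f y| ≤ M * exp (b * y))
    (n : ℕ) {y : ℝ} (hy : 0 < y) :
    |convPow f n y| ≤ M ^ (n + 1) * y ^ n * exp (b * y) / n.factorial := by
  induction n generalizing y with
  | zero => simpa [convPow] using hf y hy
  | succ n ih =>
    set C := M ^ (n + 2) * exp (b * y) / n.factorial
    have hbound : ∀ᵐ v, v ∈ Set.Ioc 0 y → ‖convPow f n (y - v) * f v‖ ≤ C * (y - v) ^ n := by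
      -- `v = y` must be excluded: the induction hypothesis says nothing about `convPow f n 0`.
      filter_upwards [compl_mem_ae_iff.mpr (measure_singleton y)] with v hv_ne ⟨hv0, hvy⟩
      have hyv : 0 < y - v := sub_pos.2 (lt_of_le_of_ne hvy hv_ne)
      calc ‖convPow f n (y - v) * f v‖
          ≤ M ^ (n + 1) * (y - v) ^ n * exp (b * (y - v)) / n.factorial * (M * exp (b * v)) := by
            rw [Real.norm_eq_abs, abs_mul]
            exact mul_le_mul (ih hyv) (hf v hv0) (abs_nonneg _) ((abs_nonneg _).trans (ih hyv))
        _ = C * (y - v) ^ n := by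
            rw [mul_sub, exp_sub]
            simp only [C]
            field_simp
            ring
    calc |convPow f (n + 1) y| = ‖∫ v in (0 : ℝ)..y, convPow f n (y - v) * f v‖ := rfl
      _ ≤ ∫ v in (0 : ℝ)..y, C * (y - v) ^ n :=
          intervalIntegral.norm_integral_le_of_norm_le hy.le hbound
            ((by fun_prop : Continuous fun v => C * (y - v) ^ n).intervalIntegrable _ _)
      _ = M ^ (n + 2) * y ^ (n + 1) * exp (b * y) / (n + 1).factorial := by
          rw [intervalIntegral.integral_const_mul, integral_sub_pow, Nat.factorial_succ]
          push_cast
          simp only [C]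
          field_simp

theorem stmt9_general (f : ℝ → ℝ) (a' M : ℝ)
    (hM : ∀ y : ℝ, 0 < y → |Real.exp (-(a' * y)) * f y| ≤ M)
    (a : ℝ) (n : ℕ) (y : ℝ) (hy : 0 < y) :
    |Real.exp (-(a * y)) * convPow f n y|
      ≤ M ^ (n + 1) * y ^ n * Real.exp (-((a - a') * y)) / n.factorial := by
  have hconv := abs_convPow_le (fun v hv => abs_le_mul_exp_of_abs_exp_neg_mul_le (hM v hv)) n hy
  rw [abs_mul, abs_of_pos (exp_pos _)]
  calc exp (-(a * y)) * |convPow f n y|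
      ≤ exp (-(a * y)) * (M ^ (n + 1) * y ^ n * exp (a' * y) / n.factorial) := by gcongr
    _ = M ^ (n + 1) * y ^ n * exp (-((a - a') * y)) / n.factorial := by
        rw [show -((a - a') * y) = -(a * y) + a' * y by ring, exp_add]
        ring

/-- If `f_{a'}(y) = e^{-a' y} f(y)` is bounded by `M` on `(0,∞)` for some `a' ≥ 0`, then for
every `a ≥ a'`, every `n ≥ 1` and `y > 0`,
`|e^{-a y} f^{*n}(y)| ≤ M^n · y^{n-1} e^{-(a-a') y} / (n-1)!`. -/
theorem stmt9 (f : ℝ → ℝ) (hf : Measurable f) (a' M : ℝ) (ha' : 0 ≤ a')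
    (hM : ∀ y : ℝ, 0 < y → |Real.exp (-(a' * y)) * f y| ≤ M)
    (a : ℝ) (ha : a' ≤ a) (n : ℕ) (y : ℝ) (hy : 0 < y) :
    |Real.exp (-(a * y)) * convPow f n y|
      ≤ M ^ (n + 1) * y ^ n * Real.exp (-((a - a') * y)) / n.factorial :=
  stmt9_general f a' M hM a n y hy
end
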